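/- arXiv:2403.08709 — 3 statements merged into one kernel-verified Lean document; each statement's English description precedes it below -/
import Mathlib

section
/- Let a, b ∈ ℕ with b ≥ 1. On ℝ² × ℝ² with variables (x, y; ξ, η), consider the three symbols X₁(x, y, ξ, η) = ξ, X₂(x, y, ξ, η) = x^{2a+1}·η, X₃(x, y, ξ, η) = x^{a}·y^{b}·η, and the point ρ = ((0,0); (0,1)). Then the type of the family (X₁, X₂, X₃) at ρ equals 2a + 2, i.e. τ(ρ; X) = 2a + 2. -/
/-- Poisson bracket of functions on `ℝ² × ℝ²` in the variables `((x,y), (ξ,η))`. -/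
noncomputable def poissonBracket
    (q₁ q₂ : EuclideanSpace ℝ (Fin 2) × EuclideanSpace ℝ (Fin 2) → ℝ) :
    EuclideanSpace ℝ (Fin 2) × EuclideanSpace ℝ (Fin 2) → ℝ :=
  fun z => ∑ j : Fin 2,
    (fderiv ℝ q₁ z (0, EuclideanSpace.single j 1) *
        fderiv ℝ q₂ z (EuclideanSpace.single j 1, 0) -
      fderiv ℝ q₁ z (EuclideanSpace.single j 1, 0) *
        fderiv ℝ q₂ z (0, EuclideanSpace.single j 1))

/-- Iterated Poisson bracket `f^I` for the index sequence `(i, I₁, …, I_s)`. -/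
noncomputable def iterBracket {S : Type*}
    (f : S → (EuclideanSpace ℝ (Fin 2) × EuclideanSpace ℝ (Fin 2) → ℝ))
    (i : S) (I : List S) :
    EuclideanSpace ℝ (Fin 2) × EuclideanSpace ℝ (Fin 2) → ℝ :=
  I.foldl (fun g j => poissonBracket g (f j)) (f i)

/-- The type `τ(z)` of a finite family of symbols at a point `z`. -/
noncomputable def familyType {S : Type*}
    (f : S → (EuclideanSpace ℝ (Fin 2) × EuclideanSpace ℝ (Fin 2) → ℝ))
    (z : EuclideanSpace ℝ (Fin 2) × EuclideanSpace ℝ (Fin 2)) : ℕ∞ :=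
  sInf {m : ℕ∞ | ∃ (i : S) (I : List S),
    iterBracket f i I z ≠ 0 ∧ m = ((I.length + 1 : ℕ) : ℕ∞)}

/-!
Give `x` weight `1` and `y` weight `a + 1`. Every generator other than `ξ` is `P(x, y) η` with `P`
of weighted order at least `2a + 1`, and bracketing `P η` with `ξ` or with `Q η` (where `Q` has
order `≥ 2a + 1`) gives `-∂ₓP η` or `(P ∂_y Q - Q ∂_y P) η`, whose order drops by at most one. Such
a symbol is nonzero at `ρ` only if `P(0, 0) ≠ 0`, so at least `2a + 1` brackets are needed; and
bracketing `x^{2a+1} η` with `ξ` exactly `2a + 1` times gives `-(2a + 1)! η`.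
-/

open MvPolynomial

theorem HasFDerivAt.mvPolynomial_eval {𝕜 F σ : Type*} [NontriviallyNormedField 𝕜]
    [NormedAddCommGroup F] [NormedSpace 𝕜 F] [Fintype σ] {u : σ → F → 𝕜}
    {u' : σ → F →L[𝕜] 𝕜} {z : F} (hu : ∀ i, HasFDerivAt (u i) (u' i) z)
    (P : MvPolynomial σ 𝕜) :
    HasFDerivAt (fun z => eval (u · z) P) (∑ i, eval (u · z) (pderiv i P) • u' i) z := by
  classical
  induction P using MvPolynomial.induction_on with
  | C c =>
    simp only [eval_C]
    exact (hasFDerivAt_const c z).congr_fderiv (ContinuousLinearMap.ext fun v => by simp)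
  | add P Q hP hQ =>
    have h : (fun z => eval (u · z) (P + Q)) = _ + _ := funext fun z => map_add _ P Q
    rw [h]
    refine (hP.add hQ).congr_fderiv (ContinuousLinearMap.ext fun v => ?_)
    simp [add_mul, Finset.sum_add_distrib]
  | mul_X P n hP =>
    have h : (fun z => eval (u · z) (P * X n)) = (fun z => eval (u · z) P) * u n :=
      funext fun z => by simp
    rw [h]
    refine (hP.mul (hu n)).congr_fderiv (ContinuousLinearMap.ext fun v => ?_)
    simp [pderiv_X, Pi.single_apply, add_mul, Finset.sum_add_distrib, Finset.mul_sum, apply_ite,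
      ite_mul, mul_assoc]

namespace MvPolynomial

theorem iterate_neg_pderiv_X_pow {σ R : Type*} [CommRing R] (i : σ) (n m : ℕ) :
    (fun Q => -pderiv i Q)^[m] (X i ^ n : MvPolynomial σ R)
      = C ((-1) ^ m * (n.descFactorial m : R)) * X i ^ (n - m) := by
  induction m with
  | zero => simp
  | succ m ih =>
    rw [Function.iterate_succ_apply', ih, pderiv_C_mul, pderiv_pow, pderiv_X_self,
      Nat.descFactorial_succ, Nat.sub_sub]
    simp only [map_mul, map_pow, map_neg, map_one, map_natCast]
    push_cast
    ring

variable {σ : Type*}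

noncomputable def weightedOrderGE (R : Type*) [CommSemiring R] (w : σ → ℕ) (k : ℕ) :
    Submodule R (MvPolynomial σ R) :=
  restrictSupport R {d | k ≤ Finsupp.weight w d}

variable {R : Type*} [CommSemiring R] {w : σ → ℕ} {k l : ℕ} {P Q : MvPolynomial σ R}

theorem mem_weightedOrderGE_iff :
    P ∈ weightedOrderGE R w k ↔ ∀ d ∈ P.support, k ≤ Finsupp.weight w d := Iff.rfl

theorem weightedOrderGE_antitone (h : l ≤ k) : weightedOrderGE R w k ≤ weightedOrderGE R w l :=
  restrictSupport_mono R fun _ hd => h.trans hd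

theorem mul_mem_weightedOrderGE (hP : P ∈ weightedOrderGE R w k)
    (hQ : Q ∈ weightedOrderGE R w l) : P * Q ∈ weightedOrderGE R w (k + l) := by
  classical
  rw [mem_weightedOrderGE_iff] at *
  intro d hd
  obtain ⟨d₁, hd₁, d₂, hd₂, rfl⟩ := Finset.mem_add.1 (support_mul P Q hd)
  simpa using add_le_add (hP d₁ hd₁) (hQ d₂ hd₂)

theorem pow_mem_weightedOrderGE (hP : P ∈ weightedOrderGE R w k) (n : ℕ) :
    P ^ n ∈ weightedOrderGE R w (n * k) := by
  induction n with
  | zero => exact fun _ _ => (zero_mul k).trans_le (Nat.zero_le _)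
  | succ n ih => simpa [pow_succ, add_mul] using mul_mem_weightedOrderGE ih hP

theorem X_mem_weightedOrderGE (i : σ) : (X i : MvPolynomial σ R) ∈ weightedOrderGE R w (w i) := by
  classical
  rw [X, weightedOrderGE, monomial_mem_restrictSupport]
  simp [Finsupp.weight_single]

theorem pderiv_mem_weightedOrderGE (i : σ) (hP : P ∈ weightedOrderGE R w k) :
    pderiv i P ∈ weightedOrderGE R w (k - w i) := by
  classical
  rw [mem_weightedOrderGE_iff] at *
  intro d hd
  rw [mem_support_iff, coeff_pderiv] at hd
  have := hP _ (mem_support_iff.2 (left_ne_zero_of_mul hd))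
  simp only [map_add, Finsupp.weight_single, smul_eq_mul] at this
  omega

theorem constantCoeff_eq_zero_of_mem_weightedOrderGE (hP : P ∈ weightedOrderGE R w k)
    (hk : 0 < k) : constantCoeff P = 0 := by
  by_contra h
  rw [constantCoeff_eq] at h
  have := hP (mem_support_iff.2 h)
  simp only [Set.mem_ofPred_eq, map_zero] at this
  omega

end MvPolynomial

abbrev PhaseSpace := EuclideanSpace ℝ (Fin 2) × EuclideanSpace ℝ (Fin 2)

def xiSymbol : PhaseSpace → ℝ := fun z => z.2 0

noncomputable def polySymbol (P : MvPolynomial (Fin 2) ℝ) : PhaseSpace → ℝ :=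
  fun z => eval (z.1 ·) P * z.2 1

theorem polySymbol_zero : polySymbol 0 = 0 := by
  ext z
  simp [polySymbol]

theorem fderiv_xiSymbol_apply (z v : PhaseSpace) : fderiv ℝ xiSymbol z v = v.2 0 := by
  have h : HasFDerivAt xiSymbol _ z := ((EuclideanSpace.proj (0 : Fin 2)).comp
    (ContinuousLinearMap.snd ℝ (EuclideanSpace ℝ (Fin 2)) (EuclideanSpace ℝ (Fin 2)))).hasFDerivAt
  rw [h.fderiv]
  rfl

theorem fderiv_polySymbol_apply (P : MvPolynomial (Fin 2) ℝ) (z v : PhaseSpace) :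
    fderiv ℝ (polySymbol P) z v =
      (∑ i, eval (z.1 ·) (pderiv i P) * v.1 i) * z.2 1 + eval (z.1 ·) P * v.2 1 := by
  have hx (i : Fin 2) := ((EuclideanSpace.proj i).comp
    (ContinuousLinearMap.fst ℝ (EuclideanSpace ℝ (Fin 2)) (EuclideanSpace ℝ (Fin 2)))).hasFDerivAt
    (x := z)
  have hη := ((EuclideanSpace.proj (1 : Fin 2)).comp
    (ContinuousLinearMap.snd ℝ (EuclideanSpace ℝ (Fin 2)) (EuclideanSpace ℝ (Fin 2)))).hasFDerivAt
    (x := z)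
  have h : HasFDerivAt (polySymbol P) _ z := (HasFDerivAt.mvPolynomial_eval hx P).mul hη
  rw [h.fderiv]
  simp only [ContinuousLinearMap.comp_apply, ContinuousLinearMap.coe_fst', PiLp.proj_apply,
    Fin.sum_univ_two, smul_add, add_apply, smul_apply,
    ContinuousLinearMap.coe_snd', smul_eq_mul]
  ring

theorem poissonBracket_polySymbol (P Q : MvPolynomial (Fin 2) ℝ) :
    poissonBracket (polySymbol P) (polySymbol Q) = polySymbol (P * pderiv 1 Q - Q * pderiv 1 P) := by
  ext z
  simp only [poissonBracket, fderiv_polySymbol_apply, PiLp.zero_apply, mul_zero,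
    Finset.sum_const_zero, zero_mul, PiLp.single_apply, mul_ite, mul_one, zero_add,
    Finset.sum_ite_eq', Finset.mem_univ, ↓reduceIte, add_zero, ite_mul, Finset.sum_sub_distrib,
    Finset.sum_ite_eq, polySymbol, map_sub, map_mul]
  ring

theorem poissonBracket_polySymbol_xiSymbol (P : MvPolynomial (Fin 2) ℝ) :
    poissonBracket (polySymbol P) xiSymbol = polySymbol (-pderiv 0 P) := by
  ext z
  simp [poissonBracket, fderiv_polySymbol_apply, fderiv_xiSymbol_apply, polySymbol,
    PiLp.single_apply]

theorem poissonBracket_xiSymbol_polySymbol (Q : MvPolynomial (Fin 2) ℝ) :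
    poissonBracket xiSymbol (polySymbol Q) = polySymbol (pderiv 0 Q) := by
  ext z
  simp [poissonBracket, fderiv_polySymbol_apply, fderiv_xiSymbol_apply, polySymbol,
    PiLp.single_apply]

theorem poissonBracket_xiSymbol_self : poissonBracket xiSymbol xiSymbol = 0 := by
  ext z
  simp [poissonBracket, fderiv_xiSymbol_apply, PiLp.single_apply]

noncomputable def basePoint : PhaseSpace := (0, EuclideanSpace.single 1 1)

def typeWeight (a : ℕ) : Fin 2 → ℕ := ![1, a + 1]

/-- `ξ` is admitted at every level `k`: it vanishes at `ρ`, and its brackets with the generators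
are `P η` with `P` of order `≥ 2a`. -/
def IsSymbolOfWeightedOrderGE (a k : ℕ) (g : PhaseSpace → ℝ) : Prop :=
  g = xiSymbol ∨ ∃ P ∈ weightedOrderGE ℝ (typeWeight a) k, g = polySymbol P

theorem IsSymbolOfWeightedOrderGE.apply_basePoint_eq_zero {a k : ℕ} {g : PhaseSpace → ℝ}
    (hg : IsSymbolOfWeightedOrderGE a k g) (hk : 0 < k) : g basePoint = 0 := by
  rcases hg with rfl | ⟨P, hP, rfl⟩
  · simp [xiSymbol, basePoint]
  · simp [polySymbol, basePoint, constantCoeff_eq_zero_of_mem_weightedOrderGE hP hk]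

theorem IsSymbolOfWeightedOrderGE.poissonBracket {a k : ℕ} {g h : PhaseSpace → ℝ}
    (hg : IsSymbolOfWeightedOrderGE a (k + 1) g) (hh : IsSymbolOfWeightedOrderGE a (2 * a + 1) h)
    (hk : k ≤ 2 * a) : IsSymbolOfWeightedOrderGE a k (poissonBracket g h) := by
  have hw₀ : typeWeight a 0 = 1 := rfl
  have hw₁ : typeWeight a 1 = a + 1 := rfl
  right
  rcases hg with rfl | ⟨P, hP, rfl⟩ <;> rcases hh with rfl | ⟨Q, hQ, rfl⟩
  · exact ⟨0, zero_mem _, by rw [poissonBracket_xiSymbol_self, polySymbol_zero]⟩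
  · refine ⟨_, weightedOrderGE_antitone ?_ (pderiv_mem_weightedOrderGE 0 hQ),
      poissonBracket_xiSymbol_polySymbol Q⟩
    omega
  · refine ⟨_, neg_mem (weightedOrderGE_antitone ?_ (pderiv_mem_weightedOrderGE 0 hP)),
      poissonBracket_polySymbol_xiSymbol P⟩
    omega
  · refine ⟨_, sub_mem ?_ ?_, poissonBracket_polySymbol P Q⟩
    · refine weightedOrderGE_antitone ?_
        (mul_mem_weightedOrderGE hP (pderiv_mem_weightedOrderGE 1 hQ))
      omega
    · refine weightedOrderGE_antitone ?_
        (mul_mem_weightedOrderGE hQ (pderiv_mem_weightedOrderGE 1 hP))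
      omega

section Family

variable {ι : Type*} {f : ι → PhaseSpace → ℝ} {a : ℕ}

theorem isSymbolOfWeightedOrderGE_foldl_poissonBracket
    (hf : ∀ j, IsSymbolOfWeightedOrderGE a (2 * a + 1) (f j)) (I : List ι)
    {g : PhaseSpace → ℝ} {k : ℕ} (hk : k + I.length ≤ 2 * a + 1)
    (hg : IsSymbolOfWeightedOrderGE a (k + I.length) g) :
    IsSymbolOfWeightedOrderGE a k (I.foldl (fun g j => poissonBracket g (f j)) g) := by
  induction I generalizing g k with
  | nil => simpa using hg
  | cons j I ih =>
    simp only [List.length_cons, ← add_assoc] at hk hg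
    exact ih (by omega) (hg.poissonBracket (hf j) (by omega))

theorem two_mul_add_one_le_length_of_iterBracket_ne_zero
    (hf : ∀ j, IsSymbolOfWeightedOrderGE a (2 * a + 1) (f j)) {i : ι} {I : List ι}
    (hne : iterBracket f i I basePoint ≠ 0) : 2 * a + 1 ≤ I.length := by
  by_contra! hI
  have hfold := isSymbolOfWeightedOrderGE_foldl_poissonBracket hf I (k := 2 * a + 1 - I.length)
    (by omega) (by rw [Nat.sub_add_cancel hI.le]; exact hf i)
  exact hne (hfold.apply_basePoint_eq_zero (by omega))

theorem foldl_replicate_poissonBracket_xiSymbol {j : ι} (hj : f j = xiSymbol) (n : ℕ)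
    (P : MvPolynomial (Fin 2) ℝ) :
    (List.replicate n j).foldl (fun g j => poissonBracket g (f j)) (polySymbol P)
      = polySymbol ((fun Q => -pderiv 0 Q)^[n] P) := by
  induction n generalizing P with
  | zero => rfl
  | succ n ih =>
    rw [List.replicate_succ, List.foldl_cons, hj, poissonBracket_polySymbol_xiSymbol, ih]
    rfl

theorem iterBracket_replicate_basePoint_ne_zero {i j : ι} (n : ℕ) (hj : f j = xiSymbol)
    (hi : f i = polySymbol (X 0 ^ n)) : iterBracket f i (List.replicate n j) basePoint ≠ 0 := by
  rw [iterBracket, hi, foldl_replicate_poissonBracket_xiSymbol hj, iterate_neg_pderiv_X_pow]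
  simp [polySymbol, basePoint, Nat.descFactorial_self, Nat.factorial_ne_zero]

end Family

/-- For the symbols `X₁ = ξ`, `X₂ = x^{2a+1}η`, `X₃ = xᵃyᵇη` on `ℝ² × ℝ²` (`b ≥ 1`),
the type of the family `(X₁, X₂, X₃)` at `ρ = ((0,0); (0,1))` equals `2a + 2`. -/
theorem type_X_eq_two_a_add_two
    (a b : ℕ) (hb : 1 ≤ b)
    (X : Fin 3 → (EuclideanSpace ℝ (Fin 2) × EuclideanSpace ℝ (Fin 2) → ℝ))
    (hX0 : ∀ z, X 0 z = z.2 0)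
    (hX1 : ∀ z, X 1 z = (z.1 0) ^ (2 * a + 1) * z.2 1)
    (hX2 : ∀ z, X 2 z = (z.1 0) ^ a * (z.1 1) ^ b * z.2 1) :
    familyType X ((0 : EuclideanSpace ℝ (Fin 2)),
        (EuclideanSpace.single 1 1 : EuclideanSpace ℝ (Fin 2))) =
      ((2 * a + 2 : ℕ) : ℕ∞) := by
  have hX₀ : X 0 = xiSymbol := funext hX0
  have hX₁ : X 1 = polySymbol (.X 0 ^ (2 * a + 1)) := funext fun z => by simp [polySymbol, hX1]
  have hX₂ : X 2 = polySymbol (.X 0 ^ a * .X 1 ^ b) := funext fun z => by simp [polySymbol, hX2]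
  have hx : .X 0 ∈ weightedOrderGE ℝ (typeWeight a) 1 := X_mem_weightedOrderGE 0
  have hy : .X 1 ∈ weightedOrderGE ℝ (typeWeight a) (a + 1) := X_mem_weightedOrderGE 1
  have hgen : ∀ j, IsSymbolOfWeightedOrderGE a (2 * a + 1) (X j) := by
    intro j
    fin_cases j
    · exact .inl hX₀
    · exact .inr ⟨_, by simpa using pow_mem_weightedOrderGE hx (2 * a + 1), hX₁⟩
    · refine .inr ⟨_, weightedOrderGE_antitone ?_ (mul_mem_weightedOrderGE
        (pow_mem_weightedOrderGE hx a) (pow_mem_weightedOrderGE hy b)), hX₂⟩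
      nlinarith
  apply le_antisymm
  · refine sInf_le ⟨1, _, iterBracket_replicate_basePoint_ne_zero (2 * a + 1) hX₀ hX₁, ?_⟩
    simp only [List.length_replicate]
  · refine le_sInf fun _ ⟨i, I, hne, hm⟩ => hm ▸ ?_
    have := two_mul_add_one_le_length_of_iterBracket_ne_zero hgen hne
    exact_mod_cast (by omega : 2 * a + 2 ≤ I.length + 1)
end

section
/- Let a, b ∈ ℕ with b ≥ 1. On ℝ² × ℝ² with variables (x, y; ξ, η), let p⁰(x, y, ξ, η) = ξ² + x^{4a+2}·η² + x^{2a}·y^{2b}·η², and define the family 𝒫 = (p¹, p², p³, p⁴) by p¹ = ∂_ξ p⁰ = 2ξ, p² = ∂_η p⁰ = 2x^{4a+2}η + 2x^{2a}y^{2b}η, p³(x,y,ξ,η) = (1 + ξ² + η²)^{1/2}·∂_x p⁰(x,y,ξ,η), and p⁴(x,y,ξ,η) = (1 + ξ² + η²)^{1/2}·∂_y p⁰(x,y,ξ,η). Then at the point ρ = ((0,0); (0,1)) the type of the family 𝒫 equals 2(2a+1), i.e. τ(ρ; 𝒫) = 4a + 2. -/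
-- ============ auxiliary infrastructure ============
namespace PoissonAux

abbrev E2 := EuclideanSpace ℝ (Fin 2)
abbrev Z2 := E2 × E2

noncomputable def vXd : Z2 := (EuclideanSpace.single (0:Fin 2) (1:ℝ), 0)
noncomputable def vYd : Z2 := (EuclideanSpace.single (1:Fin 2) (1:ℝ), 0)
noncomputable def vGd : Z2 := ((0:E2), EuclideanSpace.single (0:Fin 2) (1:ℝ))
noncomputable def vHd : Z2 := ((0:E2), EuclideanSpace.single (1:Fin 2) (1:ℝ))

noncomputable def Lx : Z2 →L[ℝ] ℝ := (EuclideanSpace.proj (0:Fin 2)).comp (ContinuousLinearMap.fst ℝ E2 E2)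
noncomputable def Ly : Z2 →L[ℝ] ℝ := (EuclideanSpace.proj (1:Fin 2)).comp (ContinuousLinearMap.fst ℝ E2 E2)
noncomputable def Lg : Z2 →L[ℝ] ℝ := (EuclideanSpace.proj (0:Fin 2)).comp (ContinuousLinearMap.snd ℝ E2 E2)
noncomputable def Lh : Z2 →L[ℝ] ℝ := (EuclideanSpace.proj (1:Fin 2)).comp (ContinuousLinearMap.snd ℝ E2 E2)

@[simp] lemma Lx_X : Lx vXd = 1 := by simp [Lx, vXd, EuclideanSpace.single_apply]
@[simp] lemma Lx_Y : Lx vYd = 0 := by simp [Lx, vYd, EuclideanSpace.single_apply]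
@[simp] lemma Lx_G : Lx vGd = 0 := by simp [Lx, vGd]
@[simp] lemma Lx_H : Lx vHd = 0 := by simp [Lx, vHd]
@[simp] lemma Ly_X : Ly vXd = 0 := by simp [Ly, vXd, EuclideanSpace.single_apply]
@[simp] lemma Ly_Y : Ly vYd = 1 := by simp [Ly, vYd, EuclideanSpace.single_apply]
@[simp] lemma Ly_G : Ly vGd = 0 := by simp [Ly, vGd]
@[simp] lemma Ly_H : Ly vHd = 0 := by simp [Ly, vHd]
@[simp] lemma Lg_X : Lg vXd = 0 := by simp [Lg, vXd]
@[simp] lemma Lg_Y : Lg vYd = 0 := by simp [Lg, vYd]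
@[simp] lemma Lg_G : Lg vGd = 1 := by simp [Lg, vGd, EuclideanSpace.single_apply]
@[simp] lemma Lg_H : Lg vHd = 0 := by simp [Lg, vHd, EuclideanSpace.single_apply]
@[simp] lemma Lh_X : Lh vXd = 0 := by simp [Lh, vXd]
@[simp] lemma Lh_Y : Lh vYd = 0 := by simp [Lh, vYd]
@[simp] lemma Lh_G : Lh vGd = 0 := by simp [Lh, vGd, EuclideanSpace.single_apply]
@[simp] lemma Lh_H : Lh vHd = 1 := by simp [Lh, vHd, EuclideanSpace.single_apply]

/-- canonical monomial shape -/
def mono (c : Z2 → ℝ) (α β γ δ : ℕ) : Z2 → ℝ :=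
  fun z => c z * (z.1 0)^α * (z.1 1)^β * (z.2 0)^γ * (z.2 1)^δ

lemma hasFDerivAt_mono {z : Z2} {c : Z2 → ℝ} (hc : DifferentiableAt ℝ c z) (α β γ δ : ℕ) :
    HasFDerivAt (mono c α β γ δ)
      (((z.1 0)^α * (z.1 1)^β * (z.2 0)^γ * (z.2 1)^δ) • fderiv ℝ c z
       + (c z * ((α:ℝ) * (z.1 0)^(α-1)) * (z.1 1)^β * (z.2 0)^γ * (z.2 1)^δ) • Lx
       + (c z * (z.1 0)^α * ((β:ℝ) * (z.1 1)^(β-1)) * (z.2 0)^γ * (z.2 1)^δ) • Ly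
       + (c z * (z.1 0)^α * (z.1 1)^β * ((γ:ℝ) * (z.2 0)^(γ-1)) * (z.2 1)^δ) • Lg
       + (c z * (z.1 0)^α * (z.1 1)^β * (z.2 0)^γ * ((δ:ℝ) * (z.2 1)^(δ-1))) • Lh) z := by
  have hX : HasFDerivAt (fun z : Z2 => (z.1 0)^α) (((α:ℝ) * (z.1 0)^(α-1)) • Lx) z :=
    (hasDerivAt_pow α (z.1 0)).comp_hasFDerivAt z Lx.hasFDerivAt
  have hY : HasFDerivAt (fun z : Z2 => (z.1 1)^β) (((β:ℝ) * (z.1 1)^(β-1)) • Ly) z :=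
    (hasDerivAt_pow β (z.1 1)).comp_hasFDerivAt z Ly.hasFDerivAt
  have hG : HasFDerivAt (fun z : Z2 => (z.2 0)^γ) (((γ:ℝ) * (z.2 0)^(γ-1)) • Lg) z :=
    (hasDerivAt_pow γ (z.2 0)).comp_hasFDerivAt z Lg.hasFDerivAt
  have hH : HasFDerivAt (fun z : Z2 => (z.2 1)^δ) (((δ:ℝ) * (z.2 1)^(δ-1)) • Lh) z :=
    (hasDerivAt_pow δ (z.2 1)).comp_hasFDerivAt z Lh.hasFDerivAt
  have := (((hc.hasFDerivAt.fun_mul hX).fun_mul hY).fun_mul hG).fun_mul hH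
  refine this.congr_fderiv (ContinuousLinearMap.ext fun v => ?_)
  simp [ContinuousLinearMap.add_apply, ContinuousLinearMap.smul_apply, smul_eq_mul]
  ring

lemma mono_differentiableAt {z : Z2} {c : Z2 → ℝ} (hc : DifferentiableAt ℝ c z) (α β γ δ : ℕ) :
    DifferentiableAt ℝ (mono c α β γ δ) z :=
  (hasFDerivAt_mono hc α β γ δ).differentiableAt

lemma mono_contDiff {c : Z2 → ℝ} (hc : ContDiff ℝ (⊤ : ℕ∞) c) (α β γ δ : ℕ) :
    ContDiff ℝ (⊤ : ℕ∞) (mono c α β γ δ) :=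
  (((hc.mul (Lx.contDiff.pow α)).mul (Ly.contDiff.pow β)).mul (Lg.contDiff.pow γ)).mul
    (Lh.contDiff.pow δ)

lemma fderiv_mono_X {z : Z2} {c : Z2 → ℝ} (hc : DifferentiableAt ℝ c z) (α β γ δ : ℕ) :
    fderiv ℝ (mono c α β γ δ) z vXd =
      fderiv ℝ c z vXd * (z.1 0)^α * (z.1 1)^β * (z.2 0)^γ * (z.2 1)^δ
      + ((α:ℝ) * c z) * (z.1 0)^(α-1) * (z.1 1)^β * (z.2 0)^γ * (z.2 1)^δ := by
  rw [(hasFDerivAt_mono hc α β γ δ).fderiv]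
  simp [ContinuousLinearMap.add_apply, ContinuousLinearMap.smul_apply, smul_eq_mul]
  ring

lemma fderiv_mono_Y {z : Z2} {c : Z2 → ℝ} (hc : DifferentiableAt ℝ c z) (α β γ δ : ℕ) :
    fderiv ℝ (mono c α β γ δ) z vYd =
      fderiv ℝ c z vYd * (z.1 0)^α * (z.1 1)^β * (z.2 0)^γ * (z.2 1)^δ
      + ((β:ℝ) * c z) * (z.1 0)^α * (z.1 1)^(β-1) * (z.2 0)^γ * (z.2 1)^δ := by
  rw [(hasFDerivAt_mono hc α β γ δ).fderiv]
  simp [ContinuousLinearMap.add_apply, ContinuousLinearMap.smul_apply, smul_eq_mul]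
  ring

lemma fderiv_mono_G {z : Z2} {c : Z2 → ℝ} (hc : DifferentiableAt ℝ c z) (α β γ δ : ℕ) :
    fderiv ℝ (mono c α β γ δ) z vGd =
      fderiv ℝ c z vGd * (z.1 0)^α * (z.1 1)^β * (z.2 0)^γ * (z.2 1)^δ
      + ((γ:ℝ) * c z) * (z.1 0)^α * (z.1 1)^β * (z.2 0)^(γ-1) * (z.2 1)^δ := by
  rw [(hasFDerivAt_mono hc α β γ δ).fderiv]
  simp [ContinuousLinearMap.add_apply, ContinuousLinearMap.smul_apply, smul_eq_mul]
  ring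

lemma fderiv_mono_H {z : Z2} {c : Z2 → ℝ} (hc : DifferentiableAt ℝ c z) (α β γ δ : ℕ) :
    fderiv ℝ (mono c α β γ δ) z vHd =
      fderiv ℝ c z vHd * (z.1 0)^α * (z.1 1)^β * (z.2 0)^γ * (z.2 1)^δ
      + ((δ:ℝ) * c z) * (z.1 0)^α * (z.1 1)^β * (z.2 0)^γ * (z.2 1)^(δ-1) := by
  rw [(hasFDerivAt_mono hc α β γ δ).fderiv]
  simp [ContinuousLinearMap.add_apply, ContinuousLinearMap.smul_apply, smul_eq_mul]
  ring

lemma contDiff_fderiv_apply {c : Z2 → ℝ} (hc : ContDiff ℝ (⊤ : ℕ∞) c) (v : Z2) :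
    ContDiff ℝ (⊤ : ℕ∞) (fun z => fderiv ℝ c z v) :=
  (hc.fderiv_right (by simp)).clm_apply contDiff_const

end PoissonAux
namespace PoissonAux

/-- weighted vanishing-order filtration: `x` has weight 1, `y` weight `2a+2`,
`ξ` weight `2a+1`, `η` weight 0. -/
inductive Fg (a : ℕ) : ℕ → (Z2 → ℝ) → Prop
  | base (k : ℕ) (c : Z2 → ℝ) (α β γ δ : ℕ) (hc : ContDiff ℝ (⊤ : ℕ∞) c)
      (hdeg : k ≤ α + (2*a+2)*β + (2*a+1)*γ) : Fg a k (mono c α β γ δ)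
  | add {k : ℕ} {f g : Z2 → ℝ} : Fg a k f → Fg a k g → Fg a k (fun z => f z + g z)
  | cgr {k : ℕ} {f g : Z2 → ℝ} : Fg a k f → (∀ z, f z = g z) → Fg a k g

namespace Fg

lemma smooth {a k f} (h : Fg a k f) : ContDiff ℝ (⊤ : ℕ∞) f := by
  induction h with
  | base c α β γ δ hc hdeg => exact mono_contDiff hc _ _ _ _
  | add h1 h2 ih1 ih2 => exact ih1.add ih2
  | cgr h1 he ih => exact (funext he) ▸ ih

lemma of_le {a k j f} (h : Fg a k f) (hj : j ≤ k) : Fg a j f := by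
  induction h generalizing j with
  | base c α β γ δ hc hdeg => exact .base j c α β γ δ hc (le_trans hj hdeg)
  | add h1 h2 ih1 ih2 => exact (ih1 hj).add (ih2 hj)
  | cgr h1 he ih => exact (ih hj).cgr he

lemma zero {a k : ℕ} : Fg a k (fun _ => (0:ℝ)) :=
  (Fg.base k (fun _ => (0:ℝ)) k 0 0 0 contDiff_const (by omega)).cgr
    (by intro z; simp [mono])

lemma mul {a k l} {f g : Z2 → ℝ} (h1 : Fg a k f) (h2 : Fg a l g) :
    Fg a (k + l) (fun z => f z * g z) := by
  induction h1 generalizing l g with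
  | add hf1 hf2 ih1 ih2 =>
      exact ((ih1 h2).add (ih2 h2)).cgr (by intro z; ring)
  | cgr hf he ih =>
      exact (ih h2).cgr (by intro z; rw [he z])
  | base c α β γ δ hc hdeg =>
      induction h2 with
      | add hg1 hg2 ih1 ih2 => exact (ih1.add ih2).cgr (by intro z; ring)
      | cgr hg he ih => exact ih.cgr (by intro z; rw [he z])
      | base c' α' β' γ' δ' hc' hdeg' =>
          refine (Fg.base (k+l) (fun z => c z * c' z) (α+α') (β+β') (γ+γ') (δ+δ')
            (hc.mul hc') ?_).cgr ?_
          · have : (α + (2*a+2)*β + (2*a+1)*γ) + (α' + (2*a+2)*β' + (2*a+1)*γ')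
                = (α+α') + (2*a+2)*(β+β') + (2*a+1)*(γ+γ') := by ring
            omega
          · intro z; simp [mono]; ring

lemma const_mul {a k} {f : Z2 → ℝ} (r : ℝ) (h : Fg a k f) : Fg a k (fun z => r * f z) := by
  have hr : Fg a 0 (fun _ => r) :=
    (Fg.base 0 (fun _ => r) 0 0 0 0 contDiff_const (by omega)).cgr (by intro z; simp [mono])
  exact ((hr.mul h).cgr (by intro z; rfl)).of_le (by omega)

lemma sub {a k} {f g : Z2 → ℝ} (h1 : Fg a k f) (h2 : Fg a k g) :
    Fg a k (fun z => f z - g z) :=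
  (h1.add (Fg.const_mul (-1) h2)).cgr (by intro z; ring)

lemma deriv_X {a k} {f : Z2 → ℝ} (h : Fg a k f) :
    Fg a (k - 1) (fun z => fderiv ℝ f z vXd) := by
  induction h with
  | cgr h1 he ih => exact (funext he) ▸ ih
  | add h1 h2 ih1 ih2 =>
      refine (ih1.add ih2).cgr fun z => ?_
      rw [fderiv_fun_add (h1.smooth.differentiable (by simp) z) (h2.smooth.differentiable (by simp) z)]
      simp
  | base c α β γ δ hc hdeg =>
      have t1 : Fg a (k-1) (mono (fun z => fderiv ℝ c z vXd) α β γ δ) :=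
        .base _ _ α β γ δ (contDiff_fderiv_apply hc vXd) (by omega)
      have t2 : Fg a (k-1) (mono (fun z => (α:ℝ) * c z) (α-1) β γ δ) :=
        .base _ _ (α-1) β γ δ (contDiff_const.mul hc) (by omega)
      refine (t1.add t2).cgr fun z => ?_
      rw [fderiv_mono_X (hc.differentiable (by simp) z) α β γ δ]
      simp [mono]

lemma deriv_Y {a k} {f : Z2 → ℝ} (h : Fg a k f) :
    Fg a (k - (2*a+2)) (fun z => fderiv ℝ f z vYd) := by
  induction h with
  | cgr h1 he ih => exact (funext he) ▸ ih
  | add h1 h2 ih1 ih2 =>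
      refine (ih1.add ih2).cgr fun z => ?_
      rw [fderiv_fun_add (h1.smooth.differentiable (by simp) z) (h2.smooth.differentiable (by simp) z)]
      simp
  | base c α β γ δ hc hdeg =>
      have t1 : Fg a (k-(2*a+2)) (mono (fun z => fderiv ℝ c z vYd) α β γ δ) :=
        .base _ _ α β γ δ (contDiff_fderiv_apply hc vYd) (by omega)
      have t2 : Fg a (k-(2*a+2)) (mono (fun z => (β:ℝ) * c z) α (β-1) γ δ) := by
        refine .base _ _ α (β-1) γ δ (contDiff_const.mul hc) ?_
        cases β with
        | zero => simp only [Nat.mul_zero] at hdeg; simp only [Nat.zero_sub, Nat.mul_zero]; omega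
        | succ β' =>
            have h2 : (2*a+2)*(β'+1) = (2*a+2)*β' + (2*a+2) := by ring
            simp only [Nat.succ_sub_one]
            omega
      refine (t1.add t2).cgr fun z => ?_
      rw [fderiv_mono_Y (hc.differentiable (by simp) z) α β γ δ]
      simp [mono]

lemma deriv_G {a k} {f : Z2 → ℝ} (h : Fg a k f) :
    Fg a (k - (2*a+1)) (fun z => fderiv ℝ f z vGd) := by
  induction h with
  | cgr h1 he ih => exact (funext he) ▸ ih
  | add h1 h2 ih1 ih2 =>
      refine (ih1.add ih2).cgr fun z => ?_
      rw [fderiv_fun_add (h1.smooth.differentiable (by simp) z) (h2.smooth.differentiable (by simp) z)]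
      simp
  | base c α β γ δ hc hdeg =>
      have t1 : Fg a (k-(2*a+1)) (mono (fun z => fderiv ℝ c z vGd) α β γ δ) :=
        .base _ _ α β γ δ (contDiff_fderiv_apply hc vGd) (by omega)
      have t2 : Fg a (k-(2*a+1)) (mono (fun z => (γ:ℝ) * c z) α β (γ-1) δ) := by
        refine .base _ _ α β (γ-1) δ (contDiff_const.mul hc) ?_
        cases γ with
        | zero => simp only [Nat.mul_zero] at hdeg; simp only [Nat.zero_sub, Nat.mul_zero]; omega
        | succ γ' =>
            have h2 : (2*a+1)*(γ'+1) = (2*a+1)*γ' + (2*a+1) := by ring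
            simp only [Nat.succ_sub_one]
            omega
      refine (t1.add t2).cgr fun z => ?_
      rw [fderiv_mono_G (hc.differentiable (by simp) z) α β γ δ]
      simp [mono]

lemma deriv_H {a k} {f : Z2 → ℝ} (h : Fg a k f) :
    Fg a k (fun z => fderiv ℝ f z vHd) := by
  induction h with
  | cgr h1 he ih => exact (funext he) ▸ ih
  | add h1 h2 ih1 ih2 =>
      refine (ih1.add ih2).cgr fun z => ?_
      rw [fderiv_fun_add (h1.smooth.differentiable (by simp) z) (h2.smooth.differentiable (by simp) z)]
      simp
  | base c α β γ δ hc hdeg =>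
      have t1 : Fg a _ (mono (fun z => fderiv ℝ c z vHd) α β γ δ) :=
        .base _ _ α β γ δ (contDiff_fderiv_apply hc vHd) hdeg
      have t2 : Fg a _ (mono (fun z => (δ:ℝ) * c z) α β γ (δ-1)) :=
        .base _ _ α β γ (δ-1) (contDiff_const.mul hc) hdeg
      refine (t1.add t2).cgr fun z => ?_
      rw [fderiv_mono_H (hc.differentiable (by simp) z) α β γ δ]
      simp [mono]

end Fg

/-- the base point ρ -/
noncomputable def ρ : Z2 := ((0 : E2), EuclideanSpace.single (1 : Fin 2) (1:ℝ))

@[simp] lemma rho_x : ρ.1 0 = 0 := rfl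
@[simp] lemma rho_y : ρ.1 1 = 0 := rfl
@[simp] lemma rho_g : ρ.2 0 = 0 := by simp [ρ, EuclideanSpace.single_apply]
@[simp] lemma rho_h : ρ.2 1 = 1 := by simp [ρ, EuclideanSpace.single_apply]

lemma Fg.vanish {a k} {f : Z2 → ℝ} (h : Fg a k f) (hk : 1 ≤ k) : f ρ = 0 := by
  induction h with
  | cgr h1 he ih => exact (he ρ) ▸ ih
  | add h1 h2 ih1 ih2 => simp [ih1, ih2]
  | base c α β γ δ hc hdeg =>
      have : α ≠ 0 ∨ β ≠ 0 ∨ γ ≠ 0 := by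
        by_contra hcon
        push_neg at hcon
        obtain ⟨h1, h2, h3⟩ := hcon
        subst h1; subst h2; subst h3
        simp only [Nat.mul_zero] at hdeg; omega
      rcases this with h | h | h <;>
        simp [mono, zero_pow h]

end PoissonAux

namespace PoissonAux

lemma poissonBracket_eq (q₁ q₂ : Z2 → ℝ) : poissonBracket q₁ q₂ = fun z =>
    (fderiv ℝ q₁ z vGd * fderiv ℝ q₂ z vXd - fderiv ℝ q₁ z vXd * fderiv ℝ q₂ z vGd)
    + (fderiv ℝ q₁ z vHd * fderiv ℝ q₂ z vYd - fderiv ℝ q₁ z vYd * fderiv ℝ q₂ z vHd) := by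
  funext z
  simp [poissonBracket, Fin.sum_univ_two, vXd, vYd, vGd, vHd]
  ring

lemma Fg.bracket {a k l} {f g : Z2 → ℝ} (h1 : Fg a k f) (h2 : Fg a l g) :
    Fg a (k + l - (2*a+2)) (poissonBracket f g) := by
  have t1 : Fg a (k + l - (2*a+2))
      (fun z => fderiv ℝ f z vGd * fderiv ℝ g z vXd) :=
    (h1.deriv_G.mul h2.deriv_X).of_le (by omega)
  have t2 : Fg a (k + l - (2*a+2))
      (fun z => fderiv ℝ f z vXd * fderiv ℝ g z vGd) :=
    (h1.deriv_X.mul h2.deriv_G).of_le (by omega)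
  have t3 : Fg a (k + l - (2*a+2))
      (fun z => fderiv ℝ f z vHd * fderiv ℝ g z vYd) :=
    (h1.deriv_H.mul h2.deriv_Y).of_le (by omega)
  have t4 : Fg a (k + l - (2*a+2))
      (fun z => fderiv ℝ f z vYd * fderiv ℝ g z vHd) :=
    (h1.deriv_Y.mul h2.deriv_H).of_le (by omega)
  refine ((t1.sub t2).add (t3.sub t4)).cgr ?_
  intro z
  rw [poissonBracket_eq]

end PoissonAux

namespace PoissonAux

/-- the symbol p⁰ as an explicit function -/
def q0 (a b : ℕ) : Z2 → ℝ := fun z =>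
  (z.2 0)^2 + (z.1 0)^(4*a+2)*(z.2 1)^2 + (z.1 0)^(2*a)*(z.1 1)^(2*b)*(z.2 1)^2

lemma fderiv_q0 (a b : ℕ) (z v : Z2) :
    fderiv ℝ (q0 a b) z v =
      2*(z.2 0) * Lg v
      + ((4*a+2:ℕ):ℝ)*(z.1 0)^(4*a+2-1)*(z.2 1)^2 * Lx v
      + 2*(z.1 0)^(4*a+2)*(z.2 1) * Lh v
      + ((2*a:ℕ):ℝ)*(z.1 0)^(2*a-1)*(z.1 1)^(2*b)*(z.2 1)^2 * Lx v
      + ((2*b:ℕ):ℝ)*(z.1 0)^(2*a)*(z.1 1)^(2*b-1)*(z.2 1)^2 * Ly v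
      + 2*(z.1 0)^(2*a)*(z.1 1)^(2*b)*(z.2 1) * Lh v := by
  have h1 := hasFDerivAt_mono (z := z) (c := fun _ => (1:ℝ)) (differentiableAt_const 1) 0 0 2 0
  have h2 := hasFDerivAt_mono (z := z) (c := fun _ => (1:ℝ)) (differentiableAt_const 1) (4*a+2) 0 0 2
  have h3 := hasFDerivAt_mono (z := z) (c := fun _ => (1:ℝ)) (differentiableAt_const 1) (2*a) (2*b) 0 2
  have H := (h1.fun_add h2).fun_add h3
  have hfun : q0 a b = fun z =>
      (mono (fun _ => (1:ℝ)) 0 0 2 0 z + mono (fun _ => (1:ℝ)) (4*a+2) 0 0 2 z)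
        + mono (fun _ => (1:ℝ)) (2*a) (2*b) 0 2 z := by
    funext w; simp only [q0, mono]; ring
  rw [hfun]
  rw [H.fderiv]
  have hc : fderiv ℝ (fun _ : Z2 => (1:ℝ)) z = 0 := fderiv_const_apply 1
  simp only [ContinuousLinearMap.add_apply, ContinuousLinearMap.smul_apply, smul_eq_mul, hc,
    ContinuousLinearMap.zero_apply]
  push_cast
  ring_nf

/-- weight of each generator -/
def ds (a : ℕ) : Fin 4 → ℕ := fun i => if i = 0 then 2*a+1 else 4*a+1

lemma ds_ge (a : ℕ) (i : Fin 4) : 2*a+1 ≤ ds a i := by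
  by_cases h : i = 0 <;> simp [ds, h] <;> omega

lemma ds_ne (a : ℕ) {i : Fin 4} (h : i ≠ 0) : ds a i = 4*a+1 := by simp [ds, h]

lemma sum_ds_ge (a : ℕ) : ∀ w : List (Fin 4), w.length * (2*a+1) ≤ (w.map (ds a)).sum := by
  intro w
  induction w with
  | nil => simp
  | cons l w ih =>
      have := ds_ge a l
      have hmul : (w.length + 1) * (2*a+1) = w.length * (2*a+1) + (2*a+1) := by ring
      simp only [List.map_cons, List.sum_cons, List.length_cons]
      omega

lemma sum_ds_lower (a : ℕ) : ∀ w : List (Fin 4), (∃ l ∈ w, l ≠ 0) →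
    (w.length - 1) * (2*a+1) + (4*a+1) ≤ (w.map (ds a)).sum := by
  intro w
  induction w with
  | nil => rintro ⟨l, hl, -⟩; simp at hl
  | cons l w ih =>
      rintro ⟨l', hl', hne⟩
      simp only [List.map_cons, List.sum_cons, List.length_cons, Nat.add_sub_cancel]
      rcases List.mem_cons.1 hl' with rfl | hmem
      · have h1 := sum_ds_ge a w
        have h2 := ds_ne a hne
        omega
      · by_cases hl0 : l' = 0
        · subst hl0
          -- the nonzero witness must be elsewhere; but l' = 0 contradicts hne
          exact absurd rfl hne
        · -- a nonzero element is in w ∨ l itself nonzero; just case on l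
          by_cases hl : l = 0
          · have h3 := ih ⟨l', hmem, hl0⟩
            have h4 := ds_ge a l
            have h5 : w.length ≥ 1 := by
              cases w with
              | nil => simp at hmem
              | cons _ _ => simp
            have hmul : (w.length - 1 + 1) * (2*a+1) = (w.length - 1) * (2*a+1) + (2*a+1) := by
              ring
            have hlen : w.length - 1 + 1 = w.length := by omega
            rw [hlen] at hmul
            omega
          · have h1 := sum_ds_ge a w
            have h2 := ds_ne a hl
            omega

lemma PB_zero_left (g : Z2 → ℝ) : poissonBracket (fun _ => (0:ℝ)) g = fun _ => 0 := by
  funext z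
  have h0 : ∀ v : Z2, fderiv ℝ (fun _ : Z2 => (0:ℝ)) z v = 0 := by
    intro v; rw [fderiv_const_apply]; rfl
  rw [poissonBracket_eq]
  simp [h0]

lemma foldl_zero (P : Fin 4 → Z2 → ℝ) (I : List (Fin 4)) :
    I.foldl (fun g j => poissonBracket g (P j)) (fun _ => (0:ℝ)) = fun _ => 0 := by
  induction I with
  | nil => rfl
  | cons j I ih => simp only [List.foldl_cons, PB_zero_left]; exact ih

lemma fderiv_twoxi (z v : Z2) : fderiv ℝ (fun z : Z2 => 2*(z.2 0)) z v = 2 * Lg v := by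
  have : HasFDerivAt (fun z : Z2 => 2*(z.2 0)) ((2:ℝ) • Lg) z := ((2:ℝ) • Lg).hasFDerivAt
  rw [this.fderiv]
  simp

lemma PB_with_P0 (g p : Z2 → ℝ) (hp : p = fun z => 2*(z.2 0)) :
    poissonBracket g p = fun z => (-2) * fderiv ℝ g z vXd := by
  rw [poissonBracket_eq, hp]
  funext z
  rw [fderiv_twoxi z vXd, fderiv_twoxi z vYd, fderiv_twoxi z vGd, fderiv_twoxi z vHd]
  simp
  ring

/-- the universal bound for iterated brackets -/
lemma iter_mem (a : ℕ) (P : Fin 4 → Z2 → ℝ) (hgen : ∀ i, Fg a (ds a i) (P i)) :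
    ∀ (I : List (Fin 4)) (i : Fin 4),
      Fg a ((ds a i + (I.map (ds a)).sum) - I.length * (2*a+2)) (iterBracket P i I) := by
  intro I
  induction I using List.reverseRecOn with
  | nil => intro i; simpa [iterBracket] using hgen i
  | append_singleton I j ih =>
      intro i
      have hfold : iterBracket P i (I ++ [j]) = poissonBracket (iterBracket P i I) (P j) := by
        simp [iterBracket, List.foldl_append]
      rw [hfold]
      have := (ih i).bracket (hgen j)
      refine this.of_le ?_
      simp only [List.map_append, List.sum_append, List.length_append, List.map_cons,
        List.sum_cons, List.map_nil, List.sum_nil, List.length_cons, List.length_nil]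
      have hmul : (I.length + (0+1)) * (2*a+2) = I.length * (2*a+2) + (2*a+2) := by ring
      rw [hmul]
      generalize I.length * (2*a+2) = n
      omega

end PoissonAux

namespace PoissonAux

/-- coefficient of the iterated x-derivative chain -/
noncomputable def Cseq (s : ℝ) (m : ℕ) : ℕ → ℝ
  | 0 => s
  | k+1 => (-2) * ((m - k : ℕ) : ℝ) * Cseq s m k

lemma Cseq_ne {s : ℝ} (hs : s ≠ 0) (m : ℕ) : ∀ k, k ≤ m → Cseq s m k ≠ 0 := by
  intro k
  induction k with
  | zero => intro _; simpa [Cseq] using hs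
  | succ k ih =>
      intro hk
      have h1 : (1:ℕ) ≤ m - k := by omega
      have h2 : ((m - k : ℕ) : ℝ) ≠ 0 := by
        have : m - k ≠ 0 := by omega
        exact_mod_cast this
      simp only [Cseq]
      exact mul_ne_zero (mul_ne_zero (by norm_num) h2) (ih (by omega))

/-- smooth positive weight √(1+ξ²+η²) -/
noncomputable def sw : Z2 → ℝ := fun z => Real.sqrt (1 + (z.2 0)^2 + (z.2 1)^2)

lemma sigma_contDiff : ContDiff ℝ (⊤ : ℕ∞) (fun w : E2 => Real.sqrt (1 + (w 0)^2 + (w 1)^2)) := by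
  refine ContDiff.sqrt ?_ ?_
  · exact (contDiff_const.add (((EuclideanSpace.proj (0:Fin 2) : E2 →L[ℝ] ℝ).contDiff).pow 2)).add
      (((EuclideanSpace.proj (1:Fin 2) : E2 →L[ℝ] ℝ).contDiff).pow 2)
  · intro w; positivity

lemma sw_contDiff : ContDiff ℝ (⊤ : ℕ∞) sw := sigma_contDiff.comp contDiff_snd

lemma fderiv_sndonly_X (σ : E2 → ℝ) (hσ : Differentiable ℝ σ) (z : Z2) :
    fderiv ℝ (fun z : Z2 => σ z.2) z vXd = 0 := by
  have h : HasFDerivAt (fun z : Z2 => σ z.2)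
      ((fderiv ℝ σ z.2).comp (ContinuousLinearMap.snd ℝ E2 E2)) z :=
    (hσ z.2).hasFDerivAt.comp z (ContinuousLinearMap.snd ℝ E2 E2).hasFDerivAt
  rw [h.fderiv]
  simp [vXd]

/-- the explicit chain of brackets of `P 2` with `P 0` -/
lemma chain (a b : ℕ) (P : Fin 4 → Z2 → ℝ)
    (hP0f : P 0 = fun z => 2*(z.2 0))
    (hP2f : P 2 = fun z =>
        mono (fun z => ((4*a+2:ℕ):ℝ) * sw z) (4*a+1) 0 0 2 z +
        mono (fun z => ((2*a:ℕ):ℝ) * sw z) (2*a-1) (2*b) 0 2 z) :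
    ∀ k, iterBracket P 2 (List.replicate k 0) = fun z =>
        mono (fun z => Cseq ((4*a+2:ℕ):ℝ) (4*a+1) k * sw z) (4*a+1-k) 0 0 2 z +
        mono (fun z => Cseq ((2*a:ℕ):ℝ) (2*a-1) k * sw z) (2*a-1-k) (2*b) 0 2 z := by
  intro k
  induction k with
  | zero => simpa [iterBracket, Cseq] using hP2f
  | succ k ih =>
      have hfold : iterBracket P 2 (List.replicate (k+1) 0) =
          poissonBracket (iterBracket P 2 (List.replicate k 0)) (P 0) := by
        rw [List.replicate_succ']
        simp [iterBracket, List.foldl_append]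
      rw [hfold, ih, PB_with_P0 _ _ hP0f]
      funext z
      have hcA : ContDiff ℝ (⊤ : ℕ∞) (fun z : Z2 => Cseq ((4*a+2:ℕ):ℝ) (4*a+1) k * sw z) :=
        contDiff_const.mul sw_contDiff
      have hcB : ContDiff ℝ (⊤ : ℕ∞) (fun z : Z2 => Cseq ((2*a:ℕ):ℝ) (2*a-1) k * sw z) :=
        contDiff_const.mul sw_contDiff
      have hA0 : fderiv ℝ (fun z : Z2 => Cseq ((4*a+2:ℕ):ℝ) (4*a+1) k * sw z) z vXd = 0 :=
        fderiv_sndonly_X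
          (fun w => Cseq ((4*a+2:ℕ):ℝ) (4*a+1) k * Real.sqrt (1 + (w 0)^2 + (w 1)^2))
          ((contDiff_const.mul sigma_contDiff).differentiable (by simp)) z
      have hB0 : fderiv ℝ (fun z : Z2 => Cseq ((2*a:ℕ):ℝ) (2*a-1) k * sw z) z vXd = 0 :=
        fderiv_sndonly_X
          (fun w => Cseq ((2*a:ℕ):ℝ) (2*a-1) k * Real.sqrt (1 + (w 0)^2 + (w 1)^2))
          ((contDiff_const.mul sigma_contDiff).differentiable (by simp)) z
      rw [fderiv_fun_add (mono_differentiableAt (hcA.differentiable (by simp) z) _ _ _ _)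
        (mono_differentiableAt (hcB.differentiable (by simp) z) _ _ _ _)]
      simp only [ContinuousLinearMap.add_apply]
      rw [fderiv_mono_X (hcA.differentiable (by simp) z) _ _ _ _,
        fderiv_mono_X (hcB.differentiable (by simp) z) _ _ _ _, hA0, hB0]
      simp only [mono, Cseq]
      rw [show 4*a+1-k-1 = 4*a+1-(k+1) from by omega,
        show 2*a-1-k-1 = 2*a-1-(k+1) from by omega]
      ring

end PoissonAux


open PoissonAux

/-- For `p⁰ = ξ² + x^{4a+2}η² + x^{2a}y^{2b}η²` on `ℝ² × ℝ²` (`b ≥ 1`) and the family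
`𝒫 = (∂_ξ p⁰, ∂_η p⁰, (1+ξ²+η²)^{1/2}∂_x p⁰, (1+ξ²+η²)^{1/2}∂_y p⁰)`, the type of `𝒫`
at `ρ = ((0,0); (0,1))` equals `2(2a+1) = 4a + 2`. -/
theorem type_P_eq_four_a_add_two
    (a b : ℕ) (hb : 1 ≤ b)
    (p0 : EuclideanSpace ℝ (Fin 2) × EuclideanSpace ℝ (Fin 2) → ℝ)
    (hp0 : ∀ z, p0 z = (z.2 0) ^ 2 + (z.1 0) ^ (4 * a + 2) * (z.2 1) ^ 2 +
      (z.1 0) ^ (2 * a) * (z.1 1) ^ (2 * b) * (z.2 1) ^ 2)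
    (P : Fin 4 → (EuclideanSpace ℝ (Fin 2) × EuclideanSpace ℝ (Fin 2) → ℝ))
    (hP0 : ∀ z, P 0 z = fderiv ℝ p0 z (0, EuclideanSpace.single 0 1))
    (hP1 : ∀ z, P 1 z = fderiv ℝ p0 z (0, EuclideanSpace.single 1 1))
    (hP2 : ∀ z, P 2 z = Real.sqrt (1 + (z.2 0) ^ 2 + (z.2 1) ^ 2) *
      fderiv ℝ p0 z (EuclideanSpace.single 0 1, 0))
    (hP3 : ∀ z, P 3 z = Real.sqrt (1 + (z.2 0) ^ 2 + (z.2 1) ^ 2) *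
      fderiv ℝ p0 z (EuclideanSpace.single 1 1, 0)) :
    familyType P ((0 : EuclideanSpace ℝ (Fin 2)),
        (EuclideanSpace.single 1 1 : EuclideanSpace ℝ (Fin 2))) =
      ((4 * a + 2 : ℕ) : ℕ∞) := by
  classical
  have hq : p0 = q0 a b := funext hp0
  have e1 : ((EuclideanSpace.single (0:Fin 2) (1:ℝ) : E2), (0:E2)) = vXd := rfl
  have e2 : ((EuclideanSpace.single (1:Fin 2) (1:ℝ) : E2), (0:E2)) = vYd := rfl
  have e3 : ((0:E2), (EuclideanSpace.single (0:Fin 2) (1:ℝ) : E2)) = vGd := rfl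
  have e4 : ((0:E2), (EuclideanSpace.single (1:Fin 2) (1:ℝ) : E2)) = vHd := rfl
  -- explicit formulas for the family
  have hP0f : P 0 = fun z => 2*(z.2 0) := by
    funext z
    rw [hP0 z, e3, hq, fderiv_q0]
    simp
  have hP1f : P 1 = fun z =>
      2*(z.1 0)^(4*a+2)*(z.2 1) + 2*(z.1 0)^(2*a)*(z.1 1)^(2*b)*(z.2 1) := by
    funext z
    rw [hP1 z, e4, hq, fderiv_q0]
    simp
  have hP2f : P 2 = fun z =>
      mono (fun z => ((4*a+2:ℕ):ℝ) * sw z) (4*a+1) 0 0 2 z +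
      mono (fun z => ((2*a:ℕ):ℝ) * sw z) (2*a-1) (2*b) 0 2 z := by
    funext z
    rw [hP2 z, e1, hq, fderiv_q0,
      show 4*a+2-1 = 4*a+1 from by omega]
    simp only [mono, sw, Lx_X, Ly_X, Lg_X, Lh_X]
    ring
  have hP3f : P 3 = fun z =>
      mono (fun z => ((2*b:ℕ):ℝ) * sw z) (2*a) (2*b-1) 0 2 z := by
    funext z
    rw [hP3 z, e2, hq, fderiv_q0]
    simp only [mono, sw, Lx_Y, Ly_Y, Lg_Y, Lh_Y]
    ring
  -- generator memberships
  have g0 : Fg a (2*a+1) (P 0) :=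
    (Fg.base (2*a+1) (fun _ => (2:ℝ)) 0 0 1 0 contDiff_const (by omega)).cgr
      (by intro z; rw [hP0f]; simp [mono])
  have hdeg1 : 4*a+1 ≤ 2*a + (2*a+2)*(2*b) + (2*a+1)*0 := by
    have h := Nat.mul_le_mul_left (2*a+2) (show 2 ≤ 2*b by omega)
    omega
  have g1 : Fg a (4*a+1) (P 1) :=
    ((Fg.base (4*a+1) (fun _ => (2:ℝ)) (4*a+2) 0 0 1 contDiff_const (by omega)).add
      (Fg.base (4*a+1) (fun _ => (2:ℝ)) (2*a) (2*b) 0 1 contDiff_const hdeg1)).cgr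
      (by intro z; rw [hP1f]; simp [mono])
  have hdeg2 : 4*a+1 ≤ (2*a-1) + (2*a+2)*(2*b) + (2*a+1)*0 := by
    have h := Nat.mul_le_mul_left (2*a+2) (show 2 ≤ 2*b by omega)
    omega
  have g2 : Fg a (4*a+1) (P 2) :=
    ((Fg.base (4*a+1) (fun z => ((4*a+2:ℕ):ℝ) * sw z) (4*a+1) 0 0 2
        (contDiff_const.mul sw_contDiff) (by omega)).add
      (Fg.base (4*a+1) (fun z => ((2*a:ℕ):ℝ) * sw z) (2*a-1) (2*b) 0 2
        (contDiff_const.mul sw_contDiff) hdeg2)).cgr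
      (by intro z; rw [hP2f])
  have hdeg3 : 4*a+1 ≤ 2*a + (2*a+2)*(2*b-1) + (2*a+1)*0 := by
    have h := Nat.mul_le_mul_left (2*a+2) (show 1 ≤ 2*b-1 by omega)
    omega
  have g3 : Fg a (4*a+1) (P 3) :=
    (Fg.base (4*a+1) (fun z => ((2*b:ℕ):ℝ) * sw z) (2*a) (2*b-1) 0 2
        (contDiff_const.mul sw_contDiff) hdeg3).cgr
      (by intro z; rw [hP3f])
  have hgen : ∀ i, Fg a (ds a i) (P i) := by
    intro i
    fin_cases i
    · simpa [ds] using g0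
    · simpa [ds] using g1
    · simpa [ds] using g2
    · simpa [ds] using g3
  -- bracket of P 0 with itself vanishes
  have hPP0 : poissonBracket (P 0) (P 0) = fun _ => (0:ℝ) := by
    rw [PB_with_P0 _ _ hP0f]
    funext z
    rw [hP0f, fderiv_twoxi]
    simp
  -- all short brackets vanish at ρ
  have hvanish : ∀ (i : Fin 4) (I : List (Fin 4)), I.length + 1 ≤ 4*a+1 →
      iterBracket P i I ρ = 0 := by
    intro i I hlen
    by_cases hz : ∃ l ∈ (i :: I), l ≠ (0 : Fin 4)
    · have hsum := sum_ds_lower a (i :: I) hz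
      have hmem := iter_mem a P hgen I i
      have hgrade : 1 ≤ (ds a i + (I.map (ds a)).sum) - I.length * (2*a+2) := by
        simp only [List.length_cons, Nat.add_sub_cancel, List.map_cons, List.sum_cons] at hsum
        have h1 : I.length * (2*a+2) = I.length * (2*a+1) + I.length := by ring
        rw [h1]
        omega
      exact (hmem.of_le hgrade).vanish le_rfl
    · push_neg at hz
      have hi : i = 0 := hz i List.mem_cons_self
      subst hi
      cases I with
      | nil =>
          rw [show iterBracket P 0 ([] : List (Fin 4)) = P 0 from rfl, hP0f]
          simp
      | cons j I' =>
          have hj : j = 0 := hz j (by simp)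
          subst hj
          have hzero : iterBracket P 0 ((0 : Fin 4) :: I') = fun _ => (0:ℝ) := by
            simp only [iterBracket, List.foldl_cons]
            rw [hPP0]
            exact foldl_zero P I'
          rw [hzero]
  -- the nonvanishing bracket of length 4a+2
  have hchain := chain a b P hP0f hP2f (4*a+1)
  have hswρ : sw ρ = Real.sqrt 2 := by
    simp [sw]
    norm_num
  have hval : iterBracket P 2 (List.replicate (4*a+1) 0) ρ ≠ 0 := by
    rw [hchain]
    simp only [mono, Nat.sub_self, rho_x, rho_y, rho_g, rho_h, pow_zero, one_pow, mul_one,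
      one_mul]
    rw [zero_pow (show 2*b ≠ 0 by omega)]
    have hC : Cseq ((4*a+2:ℕ):ℝ) (4*a+1) (4*a+1) ≠ 0 := by
      refine Cseq_ne ?_ _ _ le_rfl
      exact_mod_cast (show 4*a+2 ≠ 0 by omega)
    have hsq : Real.sqrt 2 ≠ 0 := by positivity
    rw [hswρ]
    simp only [mul_zero, zero_mul, add_zero]
    exact mul_ne_zero hC hsq
  -- final computation of the infimum
  unfold familyType
  apply le_antisymm
  · apply sInf_le
    refine ⟨2, List.replicate (4*a+1) 0, hval, ?_⟩
    rw [List.length_replicate]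
  · refine le_sInf ?_
    rintro m ⟨i, I, hne, rfl⟩
    refine Nat.cast_le.mpr ?_
    by_contra hcon
    push_neg at hcon
    exact hne (hvanish i I (by omega))
end

section
/- Let a, b ∈ ℕ with b ≥ 1. On ℝ² × ℝ² with variables (x, y; ξ, η), let p⁰ = ξ² + x^{4a+2}·η² + x^{2a}·y^{2b}·η², let g = ∂_ξ p⁰ = 2ξ and f = ∂_x p⁰. Define iterated Poisson brackets h₀ = f and h_{j+1} = {h_j, g}. Then h_{4a+1}((0,0); (0,1)) ≠ 0 (indeed h_{4a+1}((0,0);(0,1)) = (−2)^{4a+1}·(4a+2)!). -/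
/-!
Bracketing with `g = 2ξ` is `-2 ∂ₓ`, so `h_j = (-2)^j ∂ₓ^{j+1} p⁰`. The `(4a+2)`-nd
`x`-derivative kills `ξ²` and `x^{2a} y^{2b} η²`, and turns `x^{4a+2} η²` into `(4a+2)! η²`.
-/

noncomputable section

namespace PoissonModel

local notation "E" => EuclideanSpace ℝ (Fin 2) × EuclideanSpace ℝ (Fin 2)

def posCoord (i : Fin 2) : E →L[ℝ] ℝ :=
  (EuclideanSpace.proj i).comp (ContinuousLinearMap.fst ℝ _ _)

def momCoord (i : Fin 2) : E →L[ℝ] ℝ :=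
  (EuclideanSpace.proj i).comp (ContinuousLinearMap.snd ℝ _ _)

lemma hasFDerivAt_posCoord (i : Fin 2) (z : E) : HasFDerivAt (fun z : E => z.1 i) (posCoord i) z :=
  (posCoord i).hasFDerivAt

lemma hasFDerivAt_momCoord (i : Fin 2) (z : E) : HasFDerivAt (fun z : E => z.2 i) (momCoord i) z :=
  (momCoord i).hasFDerivAt

def xPartial (q : E → ℝ) : E → ℝ := fun z => fderiv ℝ q z (EuclideanSpace.single 0 1, 0)

lemma xPartial_smul (c : ℝ) (q : E → ℝ) : xPartial (c • q) = c • xPartial q := by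
  funext z
  simp [xPartial, fderiv_const_smul_field]

lemma poissonBracket_const_mul_xi (c : ℝ) (q : E → ℝ) :
    poissonBracket q (fun z => c * z.2 0) = (-c) • xPartial q := by
  funext z
  simp [poissonBracket, xPartial, ((hasFDerivAt_momCoord 0 z).const_mul c).fderiv, momCoord,
    mul_comm]

lemma eq_neg_pow_smul_iterate_xPartial (c : ℝ) {h : ℕ → E → ℝ}
    (hstep : ∀ j, h (j + 1) = poissonBracket (h j) (fun z => c * z.2 0)) (j : ℕ) :
    h j = (-c) ^ j • xPartial^[j] (h 0) := by
  induction j with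
  | zero => simp
  | succ j ih =>
    rw [hstep, poissonBracket_const_mul_xi, ih, xPartial_smul, smul_smul, pow_succ',
      Function.iterate_succ_apply']

def modelSymbol (A B C : ℝ) (m n k : ℕ) (z : E) : ℝ :=
  C * z.2 0 ^ 2 + A * z.1 0 ^ m * z.2 1 ^ 2 + B * z.1 0 ^ n * z.1 1 ^ k * z.2 1 ^ 2

lemma fderiv_modelSymbol_apply (A B C : ℝ) (m n k : ℕ) (z v : E) :
    fderiv ℝ (modelSymbol A B C m n k) z v =
      2 * C * z.2 0 * v.2 0
      + (A * m * z.1 0 ^ (m - 1) * z.2 1 ^ 2 + B * n * z.1 0 ^ (n - 1) * z.1 1 ^ k * z.2 1 ^ 2)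
        * v.1 0
      + B * k * z.1 0 ^ n * z.1 1 ^ (k - 1) * z.2 1 ^ 2 * v.1 1
      + 2 * (A * z.1 0 ^ m + B * z.1 0 ^ n * z.1 1 ^ k) * z.2 1 * v.2 1 := by
  have hx := hasFDerivAt_posCoord 0 z
  have hy := hasFDerivAt_posCoord 1 z
  have hξ := hasFDerivAt_momCoord 0 z
  have hη := hasFDerivAt_momCoord 1 z
  have hη2 := (hasDerivAt_pow 2 _).comp_hasFDerivAt z hη
  have hsymb := ((((hasDerivAt_pow 2 _).comp_hasFDerivAt z hξ).const_mul C).add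
    ((((hasDerivAt_pow m _).comp_hasFDerivAt z hx).const_mul A).mul hη2)).add
    (((((hasDerivAt_pow n _).comp_hasFDerivAt z hx).const_mul B).mul
      ((hasDerivAt_pow k _).comp_hasFDerivAt z hy)).mul hη2)
  rw [HasFDerivAt.fderiv (f := modelSymbol A B C m n k) hsymb]
  simp [posCoord, momCoord]
  ring

lemma xPartial_modelSymbol (A B C : ℝ) (m n k : ℕ) :
    xPartial (modelSymbol A B C m n k) = modelSymbol (A * m) (B * n) 0 (m - 1) (n - 1) k := by
  funext z
  simp [xPartial, fderiv_modelSymbol_apply, modelSymbol]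

lemma fderiv_modelSymbol_xi (A B C : ℝ) (m n k : ℕ) (z : E) :
    fderiv ℝ (modelSymbol A B C m n k) z (0, EuclideanSpace.single 0 1) = 2 * C * z.2 0 := by
  simp [fderiv_modelSymbol_apply]

lemma iterate_xPartial_modelSymbol (A B C : ℝ) (m n k j : ℕ) :
    xPartial^[j + 1] (modelSymbol A B C m n k) =
      modelSymbol (A * m.descFactorial (j + 1)) (B * n.descFactorial (j + 1)) 0
        (m - (j + 1)) (n - (j + 1)) k := by
  induction j with
  | zero => simp [xPartial_modelSymbol]
  | succ j ih =>
    rw [Function.iterate_succ_apply', ih, xPartial_modelSymbol, Nat.descFactorial_succ m (j + 1),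
      Nat.descFactorial_succ n (j + 1), Nat.sub_sub, Nat.sub_sub]
    push_cast
    ring_nf

end PoissonModel

end

open PoissonModel in
theorem iterated_bracket_ne_zero_general
    (a b : ℕ)
    (p0 : EuclideanSpace ℝ (Fin 2) × EuclideanSpace ℝ (Fin 2) → ℝ)
    (hp0 : ∀ z, p0 z = (z.2 0) ^ 2 + (z.1 0) ^ (4 * a + 2) * (z.2 1) ^ 2 +
      (z.1 0) ^ (2 * a) * (z.1 1) ^ (2 * b) * (z.2 1) ^ 2)
    (g f : EuclideanSpace ℝ (Fin 2) × EuclideanSpace ℝ (Fin 2) → ℝ)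
    (hg : ∀ z, g z = fderiv ℝ p0 z (0, EuclideanSpace.single 0 1))
    (hf : ∀ z, f z = fderiv ℝ p0 z (EuclideanSpace.single 0 1, 0))
    (h : ℕ → (EuclideanSpace ℝ (Fin 2) × EuclideanSpace ℝ (Fin 2) → ℝ))
    (hh0 : h 0 = f)
    (hhstep : ∀ j, h (j + 1) = poissonBracket (h j) g) :
    h (4 * a + 1) ((0 : EuclideanSpace ℝ (Fin 2)),
        (EuclideanSpace.single 1 1 : EuclideanSpace ℝ (Fin 2))) ≠ 0 ∧
    h (4 * a + 1) ((0 : EuclideanSpace ℝ (Fin 2)),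
        (EuclideanSpace.single 1 1 : EuclideanSpace ℝ (Fin 2))) =
      (-2 : ℝ) ^ (4 * a + 1) * (Nat.factorial (4 * a + 2) : ℝ) := by
  have hp : p0 = modelSymbol 1 1 1 (4 * a + 2) (2 * a) (2 * b) :=
    funext fun z => by simp [hp0, modelSymbol]
  have hg' : g = fun z => 2 * z.2 0 := funext fun z => by simp [hg, hp, fderiv_modelSymbol_xi]
  have hh : h (4 * a + 1) =
      (-2 : ℝ) ^ (4 * a + 1) • modelSymbol (4 * a + 2).factorial 0 0 0 0 (2 * b) := by
    rw [eq_neg_pow_smul_iterate_xPartial 2 (h := h) (hg' ▸ hhstep), hh0,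
      show f = xPartial p0 from funext hf, hp, ← Function.iterate_succ_apply,
      iterate_xPartial_modelSymbol, Nat.descFactorial_self,
      Nat.descFactorial_eq_zero_iff_lt.2 (by omega), Nat.sub_eq_zero_of_le (by omega : 2 * a ≤ _)]
    simp
  have hval : h (4 * a + 1) (0, EuclideanSpace.single 1 1) =
      (-2 : ℝ) ^ (4 * a + 1) * (4 * a + 2).factorial := by
    simp [hh, modelSymbol]
  exact ⟨hval ▸ mul_ne_zero (by norm_num) (by positivity), hval⟩

/-- For `p⁰ = ξ² + x^{4a+2}η² + x^{2a}y^{2b}η²` (`b ≥ 1`), with `g = ∂_ξ p⁰` and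
`f = ∂_x p⁰`, the iterated brackets `h₀ = f`, `h_{j+1} = {h_j, g}` satisfy
`h_{4a+1}((0,0);(0,1)) = (−2)^{4a+1}(4a+2)! ≠ 0`. -/
theorem iterated_bracket_ne_zero
    (a b : ℕ) (hb : 1 ≤ b)
    (p0 : EuclideanSpace ℝ (Fin 2) × EuclideanSpace ℝ (Fin 2) → ℝ)
    (hp0 : ∀ z, p0 z = (z.2 0) ^ 2 + (z.1 0) ^ (4 * a + 2) * (z.2 1) ^ 2 +
      (z.1 0) ^ (2 * a) * (z.1 1) ^ (2 * b) * (z.2 1) ^ 2)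
    (g f : EuclideanSpace ℝ (Fin 2) × EuclideanSpace ℝ (Fin 2) → ℝ)
    (hg : ∀ z, g z = fderiv ℝ p0 z (0, EuclideanSpace.single 0 1))
    (hf : ∀ z, f z = fderiv ℝ p0 z (EuclideanSpace.single 0 1, 0))
    (h : ℕ → (EuclideanSpace ℝ (Fin 2) × EuclideanSpace ℝ (Fin 2) → ℝ))
    (hh0 : h 0 = f)
    (hhstep : ∀ j, h (j + 1) = poissonBracket (h j) g) :
    h (4 * a + 1) ((0 : EuclideanSpace ℝ (Fin 2)),
        (EuclideanSpace.single 1 1 : EuclideanSpace ℝ (Fin 2))) ≠ 0 ∧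
    h (4 * a + 1) ((0 : EuclideanSpace ℝ (Fin 2)),
        (EuclideanSpace.single 1 1 : EuclideanSpace ℝ (Fin 2))) =
      (-2 : ℝ) ^ (4 * a + 1) * (Nat.factorial (4 * a + 2) : ℝ) :=
  iterated_bracket_ne_zero_general a b p0 hp0 g f hg hf h hh0 hhstep
end
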